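/- Let 0 < r < v_ref and let λ be a real number with λ ≥ λ_min(r). Then for every s ∈ ℝ with |s| ≤ r, φ(s)·(φ(s) + λ·s) ≤ 0 (the local sector condition on the friction nonlinearity). -/

import Mathlib

open Real

/-- The friction nonlinearity `F_nl`. -/
noncomputable def Fnl (m g vs muC muS : ℝ) (v : ℝ) : ℝ :=
  m * g * (muC + (muS - muC) * Real.exp (-(v ^ 2) / vs ^ 2)) * Real.sign v

/-!
For speeds `v > 0` the friction law is `m g μ_C + m g (μ_S - μ_C) exp (-v² / v_s²)`, a decreasing
function of `v`, so `φ(s) s ≤ 0` as long as `s + v_ref > 0`. Since `exp` is 1-Lipschitz on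
`(-∞, 0]`, `|φ(s)| ≤ L |s|` on `[-r, r]`, so the slopes `-φ(s)/s` are bounded above and each is
at most `λ_min(r) ≤ λ`. Then `φ(s) (φ(s) + λ s) = (φ(s) s) (λ + φ(s)/s) ≤ 0`.
-/

open Set

lemma mul_add_mul_nonpos_of_neg_div_le {y s lam : ℝ} (hs : s ≠ 0) (hsign : y * s ≤ 0)
    (hslope : -y / s ≤ lam) : y * (y + lam * s) ≤ 0 := by
  have hfactor : y * (y + lam * s) = y * s * (lam - -y / s) := by field_simp; ring
  rw [hfactor]
  exact mul_nonpos_of_nonpos_of_nonneg hsign (sub_nonneg.2 hslope)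

theorem sector_condition_of_sSup_le (phi : ℝ → ℝ) (r lam L : ℝ)
    (hsign : ∀ s, |s| ≤ r → phi s * s ≤ 0)
    (hgrowth : ∀ s, |s| ≤ r → |phi s| ≤ L * |s|)
    (hlam : sSup {y : ℝ | ∃ s ∈ Icc (-r) r, s ≠ 0 ∧ y = -phi s / s} ≤ lam) :
    ∀ s, |s| ≤ r → phi s * (phi s + lam * s) ≤ 0 := by
  intro s hs
  rcases eq_or_ne s 0 with rfl | hs0
  · have hphi0 : phi 0 = 0 := abs_nonpos_iff.1 (by simpa using hgrowth 0 hs)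
    simp [hphi0]
  -- without this, `sSup` could be the junk value `0` and bound no slope
  have hbdd : BddAbove {y : ℝ | ∃ s ∈ Icc (-r) r, s ≠ 0 ∧ y = -phi s / s} := by
    refine ⟨L, ?_⟩
    rintro _ ⟨t, ht, ht0, rfl⟩
    calc -phi t / t ≤ |-phi t / t| := le_abs_self _
      _ = |phi t| / |t| := by rw [abs_div, abs_neg]
      _ ≤ L := (div_le_iff₀ (abs_pos.2 ht0)).2 (hgrowth t (abs_le.2 ht))
  have hslope : -phi s / s ≤ lam := (le_csSup hbdd ⟨s, abs_le.1 hs, hs0, rfl⟩).trans hlam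
  exact mul_add_mul_nonpos_of_neg_div_le hs0 (hsign s hs) hslope

lemma abs_exp_sub_exp_le_of_nonpos {a b : ℝ} (ha : a ≤ 0) (hb : b ≤ 0) :
    |exp a - exp b| ≤ |a - b| := by
  wlog hab : b ≤ a generalizing a b
  · rw [abs_sub_comm, abs_sub_comm a]
    exact this hb ha (le_of_not_ge hab)
  rw [abs_of_nonneg (sub_nonneg.2 (exp_le_exp.2 hab)), abs_of_nonneg (sub_nonneg.2 hab)]
  have hfactor : exp a - exp b = exp a * (1 - exp (b - a)) := by
    rw [mul_sub, ← exp_add]; ring_nf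
  have htangent : 1 - exp (b - a) ≤ a - b := by linarith [add_one_le_exp (b - a)]
  rw [hfactor]
  calc exp a * (1 - exp (b - a)) ≤ 1 * (a - b) :=
        mul_le_mul (exp_le_one_iff.2 ha) htangent
          (sub_nonneg.2 (exp_le_one_iff.2 (by linarith))) zero_le_one
    _ = a - b := one_mul _

lemma abs_exp_neg_sq_div_sub_le (σ x y : ℝ) :
    |exp (-(x ^ 2) / σ ^ 2) - exp (-(y ^ 2) / σ ^ 2)| ≤ |x + y| / σ ^ 2 * |x - y| := by
  have hnonpos (z : ℝ) : -(z ^ 2) / σ ^ 2 ≤ 0 :=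
    div_nonpos_of_nonpos_of_nonneg (neg_nonpos.2 (sq_nonneg z)) (sq_nonneg σ)
  calc _ ≤ |-(x ^ 2) / σ ^ 2 - -(y ^ 2) / σ ^ 2| :=
        abs_exp_sub_exp_le_of_nonpos (hnonpos x) (hnonpos y)
    _ = |x + y| / σ ^ 2 * |x - y| := by
        rw [div_sub_div_same, abs_div, abs_of_nonneg (sq_nonneg σ),
          show -(x ^ 2) - -(y ^ 2) = -((x + y) * (x - y)) by ring, abs_neg, abs_mul]
        ring

lemma exp_neg_sq_div_antitoneOn (σ : ℝ) :
    AntitoneOn (fun x : ℝ => exp (-(x ^ 2) / σ ^ 2)) (Ici 0) := fun _ hx _ _ hxy =>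
  exp_le_exp.2 <| div_le_div_of_nonneg_right
    (neg_le_neg (pow_le_pow_left₀ (mem_Ici.1 hx) hxy 2)) (sq_nonneg σ)

section Friction

variable {m g vs muC muS : ℝ}

lemma Fnl_sub_Fnl_of_pos {x y : ℝ} (hx : 0 < x) (hy : 0 < y) :
    Fnl m g vs muC muS x - Fnl m g vs muC muS y =
      m * g * (muS - muC) * (exp (-(x ^ 2) / vs ^ 2) - exp (-(y ^ 2) / vs ^ 2)) := by
  rw [Fnl, Fnl, sign_of_pos hx, sign_of_pos hy]
  ring

lemma Fnl_sub_mul_sub_nonpos (hm : 0 ≤ m) (hg : 0 ≤ g) (hmu : muC ≤ muS) {x y : ℝ}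
    (hx : 0 < x) (hy : 0 < y) :
    (Fnl m g vs muC muS x - Fnl m g vs muC muS y) * (x - y) ≤ 0 := by
  have hgauss : (exp (-(x ^ 2) / vs ^ 2) - exp (-(y ^ 2) / vs ^ 2)) * (x - y) ≤ 0 :=
    (antivaryOn_id_iff.2 (exp_neg_sq_div_antitoneOn vs)).sub_mul_sub_nonpos
      (mem_Ici.2 hy.le) (mem_Ici.2 hx.le)
  have hc : 0 ≤ m * g * (muS - muC) := by have := sub_nonneg.2 hmu; positivity
  rw [Fnl_sub_Fnl_of_pos hx hy, mul_assoc]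
  exact mul_nonpos_of_nonneg_of_nonpos hc hgauss

lemma abs_Fnl_sub_Fnl_le {x y : ℝ} (hx : 0 < x) (hy : 0 < y) :
    |Fnl m g vs muC muS x - Fnl m g vs muC muS y| ≤
      |m * g * (muS - muC)| * (|x + y| / vs ^ 2) * |x - y| := by
  rw [Fnl_sub_Fnl_of_pos hx hy, abs_mul, mul_assoc |m * g * (muS - muC)|]
  exact mul_le_mul_of_nonneg_left (abs_exp_neg_sq_div_sub_le vs x y) (abs_nonneg _)

end Friction

theorem stmt10_general (m g vs muC muS vref : ℝ)
    (hm : 0 < m) (hg : 0 < g) (hmu : muC < muS)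
    (hvref : 0 < vref)
    (phi : ℝ → ℝ) (hphi : ∀ s, phi s = Fnl m g vs muC muS (s + vref) - Fnl m g vs muC muS vref)
    (lammin : ℝ → ℝ)
    (hlammin : ∀ r, lammin r = sSup {y : ℝ | ∃ s ∈ Set.Icc (-r) r, s ≠ 0 ∧ y = -phi s / s})
    (r : ℝ) (hrv : r < vref)
    (lam : ℝ) (hlam : lammin r ≤ lam) :
    ∀ s : ℝ, |s| ≤ r → phi s * (phi s + lam * s) ≤ 0 := by
  have hspeed : ∀ s : ℝ, |s| ≤ r → 0 < s + vref := fun s hs => by linarith [neg_abs_le s]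
  refine sector_condition_of_sSup_le phi r lam
    (|m * g * (muS - muC)| * ((2 * vref + r) / vs ^ 2)) (fun s hs => ?_) (fun s hs => ?_)
    (hlammin r ▸ hlam)
  · simpa [hphi] using Fnl_sub_mul_sub_nonpos hm.le hg.le hmu.le (vs := vs) (hspeed s hs) hvref
  · have hsum : |s + vref + vref| ≤ 2 * vref + r := by
      rw [abs_le]; constructor <;> linarith [abs_le.1 hs]
    calc |phi s|
        ≤ |m * g * (muS - muC)| * (|s + vref + vref| / vs ^ 2) * |s + vref - vref| := by
          rw [hphi]; exact abs_Fnl_sub_Fnl_le (hspeed s hs) hvref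
      _ ≤ |m * g * (muS - muC)| * ((2 * vref + r) / vs ^ 2) * |s| := by
          rw [add_sub_cancel_right]; gcongr

theorem stmt10 (m g vs muC muS vref : ℝ)
    (hm : 0 < m) (hg : 0 < g) (hvs : 0 < vs) (hmuC : 0 < muC) (hmu : muC < muS)
    (hvref : 0 < vref)
    (phi : ℝ → ℝ) (hphi : ∀ s, phi s = Fnl m g vs muC muS (s + vref) - Fnl m g vs muC muS vref)
    (lammin : ℝ → ℝ)
    (hlammin : ∀ r, lammin r = sSup {y : ℝ | ∃ s ∈ Set.Icc (-r) r, s ≠ 0 ∧ y = -phi s / s})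
    (r : ℝ) (hr : 0 < r) (hrv : r < vref)
    (lam : ℝ) (hlam : lammin r ≤ lam) :
    ∀ s : ℝ, |s| ≤ r → phi s * (phi s + lam * s) ≤ 0 :=
  stmt10_general m g vs muC muS vref hm hg hmu hvref phi hphi lammin hlammin r hrv lam hlam
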